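/- Let < be a term ordering, ω ∈ ℝ^n_{≥0}, and <_ω the refinement of ω by <. Then for every nonzero polynomial f, in_{<_ω}(f) = in_<(in_ω(f)); consequently in_{<_ω}(I) = in_<(in_ω(I)) for every ideal I. -/

import Mathlib

/-!
A `<_ω`-maximal term of `f` has maximal `ω`-weight, so it is a term of `in_ω(f)`, where ties
in weight are broken by `<`. For ideals, the point is that the weight-`w` piece of `in_ω(I)`
consists of the weight-`w` components of those `g ∈ I` whose terms all have weight `≤ w`: this
set is a vector space, and each of its nonzero elements is `in_ω(g)` for such a `g`. So if
`h ∈ in_ω(I)` has `<`-leading exponent `α`, the component of `h` of weight `⟨ω, α⟩` is some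
`in_ω(g)` with `g ∈ I`, has the same `<`-leading exponent, and by the first part that exponent
is the `<_ω`-leading exponent of `g`.
-/

open MvPolynomial

/-- A term ordering on the monomials (exponent vectors) of `k[x_1, …, x_n]`:
a strict total well-ordering compatible with addition of exponents. -/
structure TermOrder (n : ℕ) where
  lt : (Fin n →₀ ℕ) → (Fin n →₀ ℕ) → Prop
  irrefl : ∀ a, ¬ lt a a
  trans : ∀ a b c, lt a b → lt b c → lt a c
  trichotomous : ∀ a b, lt a b ∨ a = b ∨ lt b a
  wf : WellFounded lt
  add_right : ∀ a b c, lt a b → lt (a + c) (b + c)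

variable {n : ℕ}

/-- `α` is the exponent vector of the `t`-leading term of `f`. -/
def TermOrder.IsLeadExp {k : Type*} [CommSemiring k] (t : TermOrder n)
    (f : MvPolynomial (Fin n) k) (α : Fin n →₀ ℕ) : Prop :=
  α ∈ f.support ∧ ∀ β ∈ f.support, β ≠ α → t.lt β α

open Classical in
/-- The exponent vector of the `t`-leading term of `f` (junk value `0` if none exists). -/
noncomputable def TermOrder.leadExp {k : Type*} [CommSemiring k] (t : TermOrder n)
    (f : MvPolynomial (Fin n) k) : Fin n →₀ ℕ :=
  if h : ∃ α, t.IsLeadExp f α then h.choose else 0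

/-- The leading term `in_t(f)` of `f` with respect to the term ordering `t`. -/
noncomputable def TermOrder.leadTerm {k : Type*} [CommSemiring k] (t : TermOrder n)
    (f : MvPolynomial (Fin n) k) : MvPolynomial (Fin n) k :=
  monomial (t.leadExp f) (coeff (t.leadExp f) f)

/-- The initial ideal `in_t(I)` of `I` with respect to the term ordering `t`. -/
noncomputable def initialIdealT {k : Type*} [CommSemiring k] (t : TermOrder n)
    (I : Ideal (MvPolynomial (Fin n) k)) : Ideal (MvPolynomial (Fin n) k) :=
  Ideal.span { p | ∃ f ∈ I, f ≠ 0 ∧ p = t.leadTerm f }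

/-- The `ω`-weight `⟨ω, α⟩` of an exponent vector `α`. -/
noncomputable def wt (ω : Fin n → ℝ) (α : Fin n →₀ ℕ) : ℝ :=
  ∑ i, ω i * (α i : ℝ)

/-- The initial form `in_ω(f)`: the sum of the terms of `f` of maximal `ω`-weight. -/
noncomputable def initialForm {k : Type*} [CommSemiring k] (ω : Fin n → ℝ)
    (f : MvPolynomial (Fin n) k) : MvPolynomial (Fin n) k :=
  ∑ α ∈ f.support.filter (fun α => ∀ β ∈ f.support, wt ω β ≤ wt ω α),
    monomial α (coeff α f)

/-- The generalized initial ideal `in_ω(I)` of `I` with respect to the weight vector `ω`. -/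
noncomputable def initialIdealW {k : Type*} [CommSemiring k] (ω : Fin n → ℝ)
    (I : Ideal (MvPolynomial (Fin n) k)) : Ideal (MvPolynomial (Fin n) k) :=
  Ideal.span { p | ∃ f ∈ I, f ≠ 0 ∧ p = initialForm ω f }

/-- The refinement `<_ω` of the weight vector `ω` by the term ordering `t`:
compare first by `ω`-weight, break ties with `t`. -/
def refineLt (ω : Fin n → ℝ) (t : TermOrder n) (α β : Fin n →₀ ℕ) : Prop :=
  wt ω α < wt ω β ∨ (wt ω α = wt ω β ∧ t.lt α β)

/-- `G` is a Gröbner basis of `I` w.r.t. `t`: `G ⊆ I` and the leading terms of the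
elements of `G` generate the initial ideal `in_t(I)`. -/
def IsGroebnerBasis {k : Type*} [CommSemiring k] (t : TermOrder n)
    (I : Ideal (MvPolynomial (Fin n) k)) (G : Finset (MvPolynomial (Fin n) k)) : Prop :=
  (∀ g ∈ G, g ∈ I) ∧
    Ideal.span ((fun g => t.leadTerm g) '' (G : Set (MvPolynomial (Fin n) k)))
      = initialIdealT t I

open Classical in
/-- `G` is the reduced (marked) Gröbner basis of `I` w.r.t. `t`:
a Gröbner basis that is minimal, monic and reduced. -/
def IsReducedGB {k : Type*} [CommSemiring k] (t : TermOrder n)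
    (I : Ideal (MvPolynomial (Fin n) k)) (G : Finset (MvPolynomial (Fin n) k)) : Prop :=
  IsGroebnerBasis t I G ∧
  (∀ g ∈ G, coeff (t.leadExp g) g = 1) ∧
  (∀ g ∈ G, ∀ g' ∈ G, g ≠ g' → ∀ α ∈ g.support, ¬ t.leadExp g' ≤ α) ∧
  (∀ g ∈ G, ¬ IsGroebnerBasis t I (G.erase g))

namespace MvPolynomial

variable {σ R M : Type*} [CommSemiring R]

theorem weightedHomogeneousComponent_mul_of_isWeightedHomogeneous_left [AddCancelCommMonoid M]
    {w : σ → M} {a : MvPolynomial σ R} {i : M} (ha : a.IsWeightedHomogeneous w i) (j : M)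
    (b : MvPolynomial σ R) :
    weightedHomogeneousComponent w (i + j) (a * b) = a * weightedHomogeneousComponent w j b := by
  classical
  let := weightedGradedAlgebra R w
  simpa only [DirectSum.decompose, Equiv.coe_fn_mk, weightedDecomposition.decompose'_apply] using
    DirectSum.coe_decompose_mul_add_of_left_mem (weightedHomogeneousSubmodule R w) (j := j)
      (b := b) ha

theorem mul_mem_restrictSupport_weight_le [AddCommMonoid M] [PartialOrder M]
    [IsOrderedAddMonoid M] {w : σ → M} {a b : MvPolynomial σ R} {i j : M}
    (ha : a.IsWeightedHomogeneous w i) (hb : b ∈ restrictSupport R {d | Finsupp.weight w d ≤ j}) :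
    a * b ∈ restrictSupport R {d | Finsupp.weight w d ≤ i + j} := by
  classical
  rw [mem_restrictSupport_iff] at hb ⊢
  intro d hd
  obtain ⟨x, hx, y, hy, rfl⟩ := Finset.mem_add.mp (support_mul a b hd)
  change Finsupp.weight w (x + y) ≤ i + j
  rw [map_add]
  exact add_le_add (ha (mem_support_iff.mp hx)).le (hb hy)

end MvPolynomial

namespace TermOrder

variable (t : TermOrder n)

theorem exists_max {s : Finset (Fin n →₀ ℕ)} (hs : s.Nonempty) :
    ∃ α ∈ s, ∀ β ∈ s, β ≠ α → t.lt β α := by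
  classical
  have : IsStrictTotalOrder _ t.lt :=
    { irrefl := t.irrefl, trans := t.trans,
      trichotomous := fun a b hab hba => ((t.trichotomous a b).resolve_left hab).resolve_right hba }
  -- `Fin n →₀ ℕ` already carries the pointwise order, so `t`'s linear order is passed explicitly.
  obtain ⟨α, hα, hmax⟩ := @Finset.exists_max_image _ _ (linearOrderOfSTO t.lt) s id hs
  exact ⟨α, hα, fun β hβ hne => (hmax β hβ).resolve_left hne⟩

variable {t} {k : Type*} [CommSemiring k] {f : MvPolynomial (Fin n) k} {α : Fin n →₀ ℕ}

theorem IsLeadExp.ne_zero (h : t.IsLeadExp f α) : f ≠ 0 :=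
  ne_zero_iff.mpr ⟨α, mem_support_iff.mp h.1⟩

theorem isLeadExp_leadExp (hf : f ≠ 0) : t.IsLeadExp f (t.leadExp f) := by
  have h : ∃ α, t.IsLeadExp f α := t.exists_max (support_nonempty.mpr hf)
  rw [leadExp, dif_pos h]
  exact h.choose_spec

theorem IsLeadExp.leadExp_eq (h : t.IsLeadExp f α) : t.leadExp f = α := by
  have hlead := isLeadExp_leadExp (t := t) h.ne_zero
  by_contra hne
  exact t.irrefl α (t.trans _ _ _ (hlead.2 α h.1 (Ne.symm hne)) (h.2 _ hlead.1 hne))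

end TermOrder

theorem wt_eq_weight (ω : Fin n → ℝ) : wt ω = Finsupp.weight ω := by
  funext α
  simp [wt, Finsupp.weight_apply, Finsupp.sum_fintype, mul_comm]

section InitialForm

variable {k : Type*} [CommSemiring k] {ω : Fin n → ℝ} {f : MvPolynomial (Fin n) k}

theorem coeff_initialForm (α : Fin n →₀ ℕ) :
    coeff α (initialForm ω f) =
      if ∀ β ∈ f.support, wt ω β ≤ wt ω α then coeff α f else 0 := by
  classical
  rw [initialForm, coeff_sum]
  simp only [coeff_monomial, Finset.sum_ite_eq', Finset.mem_filter, mem_support_iff]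
  by_cases hα : coeff α f = 0 <;> simp [hα]

theorem mem_support_initialForm {α : Fin n →₀ ℕ} :
    α ∈ (initialForm ω f).support ↔ α ∈ f.support ∧ ∀ β ∈ f.support, wt ω β ≤ wt ω α := by
  rw [mem_support_iff, coeff_initialForm]
  split_ifs with h
  · exact ⟨fun hα => ⟨mem_support_iff.mpr hα, h⟩, fun hα => mem_support_iff.mp hα.1⟩
  · exact ⟨fun h0 => absurd rfl h0, fun hα => absurd hα.2 h⟩

theorem initialForm_eq_weightedHomogeneousComponent {w : ℝ}
    (hf : f ∈ restrictSupport k {α | Finsupp.weight ω α ≤ w})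
    (hw : weightedHomogeneousComponent ω w f ≠ 0) :
    initialForm ω f = weightedHomogeneousComponent ω w f := by
  rw [mem_restrictSupport_iff] at hf
  obtain ⟨δ, hδ⟩ := ne_zero_iff.mp hw
  rw [coeff_weightedHomogeneousComponent] at hδ
  obtain ⟨hδw, hδf⟩ : Finsupp.weight ω δ = w ∧ coeff δ f ≠ 0 := by
    split_ifs at hδ with h
    exacts [⟨h, hδ⟩, absurd rfl hδ]
  ext β
  rw [coeff_initialForm, coeff_weightedHomogeneousComponent, wt_eq_weight]
  by_cases hβ : Finsupp.weight ω β = w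
  · rw [if_pos (fun γ hγ => hβ ▸ hf hγ), if_pos hβ]
  · rw [if_neg hβ, ite_eq_right_iff]
    intro hmax
    by_contra hβf
    exact hβ (le_antisymm (hf (mem_support_iff.mpr hβf))
      (hδw ▸ hmax δ (mem_support_iff.mpr hδf)))

theorem exists_initialForm_eq_weightedHomogeneousComponent (hf : f ≠ 0) :
    ∃ w, f ∈ restrictSupport k {α | Finsupp.weight ω α ≤ w} ∧
      initialForm ω f = weightedHomogeneousComponent ω w f := by
  obtain ⟨α, hα, hmax⟩ := f.support.exists_max_image (Finsupp.weight ω) (support_nonempty.mpr hf)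
  have hf' : f ∈ restrictSupport k {α' | Finsupp.weight ω α' ≤ Finsupp.weight ω α} :=
    (mem_restrictSupport_iff k).mpr hmax
  refine ⟨_, hf', initialForm_eq_weightedHomogeneousComponent hf' (ne_zero_iff.mpr ⟨α, ?_⟩)⟩
  rwa [coeff_weightedHomogeneousComponent, if_pos rfl, ← mem_support_iff]

variable {t t' : TermOrder n}

theorem isLeadExp_initialForm (ht' : t'.lt = refineLt ω t) (hf : f ≠ 0) :
    t.IsLeadExp (initialForm ω f) (t'.leadExp f) := by
  obtain ⟨hmem, hmax⟩ := TermOrder.isLeadExp_leadExp (t := t') hf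
  rw [ht'] at hmax
  have hwt : ∀ β ∈ f.support, wt ω β ≤ wt ω (t'.leadExp f) := by
    intro β hβ
    by_cases hne : β = t'.leadExp f
    · exact hne ▸ le_rfl
    · rcases hmax β hβ hne with hlt | ⟨heq, -⟩
      exacts [hlt.le, heq.le]
  refine ⟨mem_support_initialForm.mpr ⟨hmem, hwt⟩, fun β hβ hne => ?_⟩
  obtain ⟨hβf, hβmax⟩ := mem_support_initialForm.mp hβ
  rcases hmax β hβf hne with hlt | ⟨-, hlt⟩
  exacts [absurd (hβmax _ hmem) hlt.not_ge, hlt]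

theorem leadTerm_eq_leadTerm_initialForm (ht' : t'.lt = refineLt ω t) (hf : f ≠ 0) :
    t'.leadTerm f = t.leadTerm (initialForm ω f) := by
  have hlead := isLeadExp_initialForm ht' hf
  rw [TermOrder.leadTerm, TermOrder.leadTerm, hlead.leadExp_eq, coeff_initialForm,
    if_pos (mem_support_initialForm.mp hlead.1).2]

end InitialForm

section InitialIdeal

variable {k : Type*} [CommSemiring k] (ω : Fin n → ℝ) (I : Ideal (MvPolynomial (Fin n) k))

/-- The weight-`w` piece of `in_ω(I)`. -/
noncomputable def initialFormsOfWeight (w : ℝ) : Submodule k (MvPolynomial (Fin n) k) :=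
  (I.restrictScalars k ⊓ restrictSupport k {α | Finsupp.weight ω α ≤ w}).map
    (weightedHomogeneousComponent ω w)

variable {ω I}

theorem mul_mem_initialFormsOfWeight {a p : MvPolynomial (Fin n) k} {i j : ℝ}
    (ha : a.IsWeightedHomogeneous ω i) (hp : p ∈ initialFormsOfWeight ω I j) :
    a * p ∈ initialFormsOfWeight ω I (i + j) := by
  obtain ⟨g, ⟨hgI, hgj⟩, rfl⟩ := hp
  rw [← weightedHomogeneousComponent_mul_of_isWeightedHomogeneous_left ha]
  exact Submodule.mem_map_of_mem
    ⟨I.mul_mem_left a hgI, mul_mem_restrictSupport_weight_le ha hgj⟩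

theorem weightedHomogeneousComponent_mem_initialFormsOfWeight {h : MvPolynomial (Fin n) k}
    (hh : h ∈ initialIdealW ω I) (w : ℝ) :
    weightedHomogeneousComponent ω w h ∈ initialFormsOfWeight ω I w := by
  induction hh using Submodule.span_induction generalizing w with
  | mem _ hp =>
    obtain ⟨g, hgI, hg0, rfl⟩ := hp
    obtain ⟨m, hgm, heq⟩ := exists_initialForm_eq_weightedHomogeneousComponent (ω := ω) hg0
    rw [heq, weightedHomogeneousComponent_of_mem (weightedHomogeneousComponent_mem ω g m)]
    split_ifs with hw
    · subst hw
      exact Submodule.mem_map_of_mem ⟨hgI, hgm⟩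
    · exact Submodule.zero_mem _
  | zero => simp
  | add x y _ _ hx hy => simpa only [map_add] using Submodule.add_mem _ (hx w) (hy w)
  | smul a x _ hx =>
    rw [smul_eq_mul]
    induction a using MvPolynomial.induction_on' with
    | monomial u c =>
      have hu := isWeightedHomogeneous_monomial ω u c rfl
      have hmem := mul_mem_initialFormsOfWeight hu (hx (w - Finsupp.weight ω u))
      rwa [add_sub_cancel, ← weightedHomogeneousComponent_mul_of_isWeightedHomogeneous_left hu,
        add_sub_cancel] at hmem
    | add a b ha hb => simpa only [add_mul, map_add] using Submodule.add_mem _ ha hb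

variable {t t' : TermOrder n}

theorem exists_leadExp_eq_leadExp (ht' : t'.lt = refineLt ω t) {h : MvPolynomial (Fin n) k}
    (hh : h ∈ initialIdealW ω I) (h0 : h ≠ 0) :
    ∃ g ∈ I, g ≠ 0 ∧ t'.leadExp g = t.leadExp h := by
  set α := t.leadExp h
  set p := weightedHomogeneousComponent ω (Finsupp.weight ω α) h
  have hlead : t.IsLeadExp h α := TermOrder.isLeadExp_leadExp h0
  have hp : t.IsLeadExp p α := by
    rw [TermOrder.IsLeadExp, support_weightedHomogeneousComponent]
    simp only [Finset.mem_filter, and_true]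
    exact ⟨hlead.1, fun β hβ => hlead.2 β hβ.1⟩
  obtain ⟨g, ⟨hgI, hgα⟩, hgp⟩ := weightedHomogeneousComponent_mem_initialFormsOfWeight hh
    (Finsupp.weight ω α)
  have hg : initialForm ω g = p := by
    rw [initialForm_eq_weightedHomogeneousComponent hgα (hgp ▸ hp.ne_zero), hgp]
  have hg0 : g ≠ 0 := by
    rintro rfl
    exact hp.ne_zero (hgp.symm.trans (map_zero _))
  refine ⟨g, hgI, hg0, ?_⟩
  rw [← (isLeadExp_initialForm ht' hg0).leadExp_eq, hg, hp.leadExp_eq]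

end InitialIdeal

theorem leadTerm_mem_initialIdealT {k : Type*} [Field k] {ω : Fin n → ℝ}
    {I : Ideal (MvPolynomial (Fin n) k)} {t t' : TermOrder n} (ht' : t'.lt = refineLt ω t)
    {h : MvPolynomial (Fin n) k} (hh : h ∈ initialIdealW ω I) (h0 : h ≠ 0) :
    t.leadTerm h ∈ initialIdealT t' I := by
  obtain ⟨g, hgI, hg0, heq⟩ := exists_leadExp_eq_leadExp ht' hh h0
  have hc : coeff (t'.leadExp g) g ≠ 0 :=
    mem_support_iff.mp (TermOrder.isLeadExp_leadExp hg0).1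
  have : t.leadTerm h = C (coeff (t.leadExp h) h / coeff (t'.leadExp g) g) * t'.leadTerm g := by
    rw [TermOrder.leadTerm, TermOrder.leadTerm, C_mul_monomial, div_mul_cancel₀ _ hc, heq]
  rw [this]
  exact Ideal.mul_mem_left _ _ (Ideal.subset_span ⟨g, hgI, hg0, rfl⟩)

theorem leadTerm_refinement_eq_general {k : Type*} [Field k] (t t' : TermOrder n)
    (ω : Fin n → ℝ) (ht' : t'.lt = refineLt ω t) :
    (∀ f : MvPolynomial (Fin n) k, f ≠ 0 →
        t'.leadTerm f = t.leadTerm (initialForm ω f)) ∧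
    ∀ I : Ideal (MvPolynomial (Fin n) k),
        initialIdealT t' I = initialIdealT t (initialIdealW ω I) := by
  refine ⟨fun f hf => leadTerm_eq_leadTerm_initialForm ht' hf, fun I => le_antisymm ?_ ?_⟩
  · refine Ideal.span_le.mpr ?_
    rintro _ ⟨f, hfI, hf0, rfl⟩
    rw [leadTerm_eq_leadTerm_initialForm ht' hf0]
    exact Ideal.subset_span ⟨_, Ideal.subset_span ⟨f, hfI, hf0, rfl⟩,
      (isLeadExp_initialForm ht' hf0).ne_zero, rfl⟩
  · refine Ideal.span_le.mpr ?_
    rintro _ ⟨h, hh, h0, rfl⟩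
    exact leadTerm_mem_initialIdealT ht' hh h0

/-- For the refinement `<_ω` of `ω` by `t`, `in_{<_ω}(f) = in_t(in_ω(f))` for
every nonzero `f`, and consequently `in_{<_ω}(I) = in_t(in_ω(I))` for every ideal `I`. -/
theorem leadTerm_refinement_eq {k : Type*} [Field k] (t t' : TermOrder n)
    (ω : Fin n → ℝ) (hω : ∀ i, 0 ≤ ω i) (ht' : t'.lt = refineLt ω t) :
    (∀ f : MvPolynomial (Fin n) k, f ≠ 0 →
        t'.leadTerm f = t.leadTerm (initialForm ω f)) ∧
    ∀ I : Ideal (MvPolynomial (Fin n) k),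
        initialIdealT t' I = initialIdealT t (initialIdealW ω I) :=
  leadTerm_refinement_eq_general t t' ω ht'
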